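/- Let t < T, let q ∈ ℕ, and for each j ∈ ℕ define φ_j : [t,T] → ℝ by φ_j(x) = √((2j+1)/(T−t)) · P_j((x − (T+t)/2) · 2/(T−t)), where P_j is the j-th Legendre polynomial, P_j(y) = (1/(2^j j!)) dʲ/dyʲ (y² − 1)ʲ. Let C_{j_2 j_1} = ∫_t^T φ_{j_2}(t_2) (∫_t^{t_2} φ_{j_1}(t_1) dt_1) dt_2. Then (T−t)²/2 − Σ_{j_1=0}^{q} Σ_{j_2=0}^{q} C_{j_2 j_1}² = ((T−t)²/2)·(1/2 − Σ_{i=1}^{q} 1/(4i² − 1)). -/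

import Mathlib

open Polynomial

noncomputable section

namespace LegAux

def f (n : ℕ) : ℝ[X] := (X ^ 2 - 1) ^ n

def cc (n : ℕ) : ℝ := 1 / (2 ^ n * n.factorial)

def Q (n : ℕ) : ℝ[X] := C (cc n) * derivative^[n] (f n)

def A : ℕ → ℝ[X]
  | 0 => X + C 1
  | (n + 1) => C (cc (n + 1)) * derivative^[n] (f (n + 1))

/-- integral functional on polynomials -/
def L (p : ℝ[X]) : ℝ := ∫ x in (-1:ℝ)..1, p.eval x

lemma L_add (p q : ℝ[X]) : L (p + q) = L p + L q := by
  unfold L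
  simp only [eval_add]
  exact intervalIntegral.integral_add (p.continuous_aeval.intervalIntegrable _ _)
    (q.continuous_aeval.intervalIntegrable _ _)

lemma L_Cmul (a : ℝ) (p : ℝ[X]) : L (C a * p) = a * L p := by
  unfold L
  simp only [eval_mul, eval_C]
  exact intervalIntegral.integral_const_mul a _

lemma L_derivative (p : ℝ[X]) : L (derivative p) = p.eval 1 - p.eval (-1) := by
  unfold L
  exact intervalIntegral.integral_deriv_eq_sub' (fun x => p.eval x)
    (funext fun x => Polynomial.deriv p)
    (fun x _ => p.hasDerivAt x |>.differentiableAt)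
    ((p.derivative.continuous_aeval).continuousOn)


lemma boundary {n j : ℕ} (hj : j < n) {x : ℝ} (hx : x ^ 2 - 1 = 0) :
    (derivative^[j] (f n)).eval x = 0 := by
  obtain ⟨g, hg⟩ := Polynomial.pow_sub_dvd_iterate_derivative_pow (X ^ 2 - 1 : ℝ[X]) n j
  rw [f, hg, eval_mul, eval_pow]
  have : ((X:ℝ[X]) ^ 2 - 1).eval x = 0 := by simpa using hx
  rw [this, zero_pow (by omega), zero_mul]

lemma L_deriv_mul (r s : ℝ[X]) :
    L (derivative r * s) = (r*s).eval 1 - (r*s).eval (-1) - L (r * derivative s) := by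
  have h := L_derivative (r * s)
  rw [derivative_mul, L_add] at h
  linarith

lemma parts (n : ℕ) (g : ℝ[X]) : ∀ k, k ≤ n →
    L (derivative^[n] (f n) * g) = (-1:ℝ)^k * L (derivative^[n-k] (f n) * derivative^[k] g) := by
  intro k
  induction k with
  | zero => simp
  | succ k ih =>
    intro hk
    rw [ih (by omega)]
    have h1 : n - k = (n - (k+1)) + 1 := by omega
    have h2 : derivative^[n-k] (f n) = derivative (derivative^[n-(k+1)] (f n)) := by
      rw [h1, Function.iterate_succ_apply']
    rw [h2, L_deriv_mul]
    have e1 : ((derivative^[n-(k+1)] (f n)) * derivative^[k] g).eval 1 = 0 := by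
      rw [eval_mul, boundary (by omega) (by norm_num), zero_mul]
    have e2 : ((derivative^[n-(k+1)] (f n)) * derivative^[k] g).eval (-1) = 0 := by
      rw [eval_mul, boundary (by omega) (by norm_num), zero_mul]
    rw [e1, e2, Function.iterate_succ_apply']
    ring

lemma monic_f (n : ℕ) : (f n).Monic := (monic_X_pow_sub_C (1:ℝ) (by norm_num)).pow n

lemma natDegree_f (n : ℕ) : (f n).natDegree = 2 * n := by
  have : (f n).natDegree = n * ((X:ℝ[X]) ^ 2 - 1).natDegree := by
    rw [f]
    exact (monic_X_pow_sub_C (1:ℝ) (by norm_num)).natDegree_pow n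
  rw [this]
  have : ((X:ℝ[X]) ^ 2 - 1).natDegree = 2 := by
    simpa using natDegree_X_pow_sub_C (n := 2) (r := (1:ℝ))
  rw [this]; ring

lemma top_derivative (n : ℕ) : derivative^[2*n] (f n) = C ((2*n).factorial : ℝ) := by
  have hdeg : (derivative^[2*n] (f n)).natDegree = 0 := by
    have h := Polynomial.natDegree_iterate_derivative (f n) (2*n)
    rw [natDegree_f] at h
    omega
  rw [eq_C_of_natDegree_eq_zero hdeg, coeff_iterate_derivative, zero_add,
    Nat.descFactorial_self]
  have hc : (f n).coeff (2*n) = 1 := by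
    have := (monic_f n).leadingCoeff
    rwa [Polynomial.leadingCoeff, natDegree_f] at this
  rw [hc]
  simp


lemma eval_f_zero {n : ℕ} (hn : 0 < n) {x : ℝ} (hx : x ^ 2 - 1 = 0) :
    (f n).eval x = 0 := by
  rw [f, eval_pow]
  have : ((X:ℝ[X]) ^ 2 - 1).eval x = 0 := by simpa using hx
  rw [this, zero_pow (by omega)]

lemma deriv_fX (m : ℕ) :
    derivative (f (m+1) * X) =
      C (2*(m:ℝ)+3) * f (m+1) + C (2*(m:ℝ)+2) * f m := by
  rw [f, f, derivative_mul, derivative_X, derivative_pow]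
  have h1 : derivative ((X:ℝ[X]) ^ 2 - 1) = C 2 * X := by
    simp [derivative_X_pow]
    rw [show (2:ℝ) = 1 + 1 by norm_num, C_add, C_1]
  rw [h1]
  simp only [Nat.add_sub_cancel, Nat.cast_add, Nat.cast_one, Nat.cast_ofNat, map_add,
    map_mul, map_natCast, map_ofNat, map_one]
  ring

lemma L_f_zero : L (f 0) = 2 := by
  rw [f, pow_zero]
  unfold L
  simp
  norm_num

lemma L_f_rec (m : ℕ) :
    (2*(m:ℝ)+3) * L (f (m+1)) = -((2*(m:ℝ)+2) * L (f m)) := by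
  have h := L_derivative (f (m+1) * X)
  rw [deriv_fX, L_add, L_Cmul, L_Cmul] at h
  have e1 : ((f (m+1)) * X).eval 1 = 0 := by
    rw [eval_mul, eval_f_zero (by omega) (by norm_num), zero_mul]
  have e2 : ((f (m+1)) * X).eval (-1) = 0 := by
    rw [eval_mul, eval_f_zero (by omega) (by norm_num), zero_mul]
  rw [e1, e2] at h
  linarith

lemma L_f (n : ℕ) :
    L (f n) = (-1:ℝ)^n * 2^(2*n+1) * (n.factorial:ℝ)^2 / ((2*n+1).factorial : ℝ) := by
  induction n with
  | zero =>
    rw [L_f_zero]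
    norm_num [Nat.factorial]
  | succ m ih =>
    have hrec := L_f_rec m
    have h3 : (2*(m:ℝ)+3) ≠ 0 := by positivity
    have hL : L (f (m+1)) = -((2*(m:ℝ)+2) * L (f m)) / (2*(m:ℝ)+3) := by
      field_simp at hrec ⊢
      linarith
    rw [hL, ih]
    have hf1 : ((2*(m+1)+1).factorial : ℝ) =
        (2*(m:ℝ)+3) * (2*(m:ℝ)+2) * ((2*m+1).factorial : ℝ) := by
      have : 2*(m+1)+1 = (2*m+1) + 1 + 1 := by omega
      rw [this, Nat.factorial_succ, Nat.factorial_succ]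
      push_cast
      ring
    have hf2 : ((m+1).factorial : ℝ) = ((m:ℝ)+1) * (m.factorial : ℝ) := by
      rw [Nat.factorial_succ]; push_cast; ring
    rw [hf1, hf2]
    have hfm : ((2*m+1).factorial : ℝ) ≠ 0 := by positivity
    have hfm2 : (m.factorial : ℝ) ≠ 0 := by positivity
    field_simp
    ring


lemma L_zero : L 0 = 0 := by
  unfold L
  simp

lemma Q_zero : Q 0 = 1 := by
  unfold Q cc f
  norm_num

lemma derivative_A (n : ℕ) : derivative (A n) = Q n := by
  cases n with
  | zero => simp [A, Q_zero]
  | succ k =>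
    rw [A, Q, derivative_C_mul, ← Function.iterate_succ_apply' derivative k (f (k+1))]

lemma A_eval_neg_one (n : ℕ) : (A n).eval (-1) = 0 := by
  cases n with
  | zero => simp [A]
  | succ k =>
    rw [A, eval_mul, boundary (by omega) (by norm_num), mul_zero]

lemma A_eval_one {n : ℕ} (hn : 1 ≤ n) : (A n).eval 1 = 0 := by
  cases n with
  | zero => omega
  | succ k =>
    rw [A, eval_mul, boundary (by omega) (by norm_num), mul_zero]

lemma A_zero_eval_one : (A 0).eval 1 = 2 := by
  simp [A]
  norm_num

def S (m n : ℕ) : ℝ := L (Q m * A n)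

lemma S_antisym (m n : ℕ) : S m n + S n m = (A m).eval 1 * (A n).eval 1 := by
  have h := L_derivative (A m * A n)
  rw [derivative_mul, derivative_A, derivative_A, L_add, eval_mul, eval_mul,
    A_eval_neg_one, zero_mul, sub_zero] at h
  have h1 : A m * Q n = Q n * A m := mul_comm _ _
  rw [h1] at h
  have h2 : Q m * A n = Q m * A n := rfl
  unfold S
  linarith

lemma S_formula (m n : ℕ) (hm : 1 ≤ m) :
    S m n = (-1:ℝ)^m * (cc m * cc n) * L (f m * derivative^[m + n - 1] (f n)) := by
  obtain ⟨k, rfl⟩ : ∃ k, m = k + 1 := ⟨m - 1, by omega⟩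
  have hQA : Q (k+1) * A n = C (cc (k+1)) * (derivative^[k+1] (f (k+1)) * A n) := by
    rw [Q]; ring
  have hDA : derivative^[k+1] (A n) = C (cc n) * derivative^[k + 1 + n - 1] (f n) := by
    rw [Function.iterate_succ_apply, derivative_A, Q, iterate_derivative_C_mul,
      ← Function.iterate_add_apply]
    congr 2
    omega
  rw [S, hQA, L_Cmul, parts (k+1) (A n) (k+1) le_rfl, hDA]
  simp only [Nat.sub_self, Function.iterate_zero_apply]
  have : f (k+1) * (C (cc n) * derivative^[k + 1 + n - 1] (f n)) =
      C (cc n) * (f (k+1) * derivative^[k + 1 + n - 1] (f n)) := by ring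
  rw [this, L_Cmul]
  ring

lemma S_zero_of_big {m n : ℕ} (h : n + 2 ≤ m) : S m n = 0 := by
  rw [S_formula m n (by omega)]
  have hz : derivative^[m + n - 1] (f n) = 0 := by
    apply iterate_derivative_eq_zero
    rw [natDegree_f]
    omega
  rw [hz, mul_zero, L_zero, mul_zero]

lemma S_succ (n : ℕ) : S (n+1) n = 2 / ((2*(n:ℝ)+1) * (2*(n:ℝ)+3)) := by
  rw [S_formula (n+1) n (by omega)]
  have he : n + 1 + n - 1 = 2 * n := by omega
  rw [he, top_derivative]
  have : f (n+1) * C (((2*n).factorial : ℕ) : ℝ) =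
      C (((2*n).factorial : ℕ) : ℝ) * f (n+1) := mul_comm _ _
  rw [this, L_Cmul, L_f]
  unfold cc
  have h1 : ((2*n+1).factorial : ℝ) ≠ 0 := by positivity
  have h2 : ((2*(n+1)+1).factorial : ℝ) =
      (2*(n:ℝ)+3) * ((2*(n:ℝ)+2) * ((2*n+1).factorial : ℝ)) := by
    have : 2*(n+1)+1 = (2*n+1) + 1 + 1 := by omega
    rw [this, Nat.factorial_succ, Nat.factorial_succ]
    push_cast
    ring
  have h3 : ((n+1).factorial : ℝ) = ((n:ℝ)+1) * (n.factorial : ℝ) := by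
    rw [Nat.factorial_succ]; push_cast; ring
  have h4 : ((2*n+1).factorial : ℝ) = (2*(n:ℝ)+1) * ((2*n).factorial : ℝ) := by
    have : 2*n+1 = (2*n) + 1 := by omega
    rw [this, Nat.factorial_succ]
    push_cast
    ring
  rw [h2, h3, h4]
  have hnf : (n.factorial : ℝ) ≠ 0 := by positivity
  have h2nf : ((2*n).factorial : ℝ) ≠ 0 := by positivity
  have hp1 : (2*(n:ℝ)+1) ≠ 0 := by positivity
  have hp2 : (2*(n:ℝ)+2) ≠ 0 := by positivity
  have hp3 : (2*(n:ℝ)+3) ≠ 0 := by positivity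
  have hsgn : (-1:ℝ)^(n*2) = 1 := by
    rw [mul_comm n 2, pow_mul]
    norm_num
  field_simp
  ring_nf
  simp only [hsgn, one_mul, mul_one]


lemma S_zero_zero : S 0 0 = 2 := by
  rw [S, Q_zero, one_mul]
  show L (X + C 1) = 2
  unfold L
  simp
  norm_num

lemma S_small {m n : ℕ} (h : m + 2 ≤ n) : S m n = 0 := by
  have h1 := S_antisym m n
  rw [A_eval_one (show 1 ≤ n by omega), mul_zero, S_zero_of_big (show m + 2 ≤ n by omega)] at h1
  linarith

lemma S_diag {n : ℕ} (hn : 1 ≤ n) : S n n = 0 := by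
  have h1 := S_antisym n n
  rw [A_eval_one hn, mul_zero] at h1
  linarith

lemma S_pred (n : ℕ) : S n (n+1) = -(2 / ((2*(n:ℝ)+1) * (2*(n:ℝ)+3))) := by
  have h1 := S_antisym n (n+1)
  rw [A_eval_one (show 1 ≤ n+1 by omega), mul_zero, S_succ] at h1
  linarith

lemma S_eq_zero {m n : ℕ} (h0 : ¬(m = 0 ∧ n = 0)) (h1 : m ≠ n + 1) (h2 : n ≠ m + 1) :
    S m n = 0 := by
  rcases lt_trichotomy m n with hlt | heq | hgt
  · exact S_small (by omega)
  · subst heq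
    exact S_diag (by omega)
  · exact S_zero_of_big (by omega)

lemma iteratedDeriv_eval (k : ℕ) (p : ℝ[X]) (y : ℝ) :
    iteratedDeriv k (fun z => p.eval z) y = (derivative^[k] p).eval y := by
  induction k generalizing p with
  | zero => simp
  | succ k ih =>
    rw [iteratedDeriv_succ', Function.iterate_succ_apply]
    have hd : deriv (fun z => p.eval z) = fun z => (derivative p).eval z :=
      funext fun z => Polynomial.deriv p
    rw [hd, ih]

lemma double_sum_eval (g : ℕ → ℕ → ℝ) (e : ℕ → ℝ) (v : ℝ)
    (h00 : g 0 0 = v)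
    (hadj : ∀ n, g (n+1) n = e n) (hadj' : ∀ n, g n (n+1) = e n)
    (hz : ∀ m n, ¬(m = 0 ∧ n = 0) → m ≠ n+1 → n ≠ m+1 → g m n = 0) :
    ∀ q, ∑ j₁ ∈ Finset.range (q+1), ∑ j₂ ∈ Finset.range (q+1), g j₂ j₁
      = v + 2 * ∑ n ∈ Finset.range q, e n := by
  intro q
  induction q with
  | zero => simp [h00]
  | succ q ih =>
    have hrow : (∑ j₁ ∈ Finset.range (q+1), g (q+1) j₁) = e q := by
      rw [Finset.sum_eq_single q]
      · exact hadj q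
      · intro b hbm hb
        have := Finset.mem_range.mp hbm
        exact hz (q+1) b (by omega) (by omega) (by omega)
      · intro hq
        exact absurd (Finset.self_mem_range_succ q) hq
    have hcol : (∑ j₂ ∈ Finset.range (q+1), g j₂ (q+1)) = e q := by
      rw [Finset.sum_eq_single q]
      · exact hadj' q
      · intro b hb hbq
        refine hz b (q+1) (by omega) ?_ (by omega)
        have := Finset.mem_range.mp hb
        omega
      · intro hq
        exact absurd (Finset.self_mem_range_succ q) hq
    have hdiag : g (q+1) (q+1) = 0 := hz (q+1) (q+1) (by omega) (by omega) (by omega)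
    rw [Finset.sum_range_succ]
    have hsplit : (∑ j₁ ∈ Finset.range (q+1), ∑ j₂ ∈ Finset.range (q+2), g j₂ j₁)
        = (∑ j₁ ∈ Finset.range (q+1), ∑ j₂ ∈ Finset.range (q+1), g j₂ j₁)
          + ∑ j₁ ∈ Finset.range (q+1), g (q+1) j₁ := by
      rw [← Finset.sum_add_distrib]
      exact Finset.sum_congr rfl fun j₁ _ => Finset.sum_range_succ _ _
    rw [hsplit, ih, hrow, Finset.sum_range_succ (f := fun j₂ => g j₂ (q+1)), hcol, hdiag,
      Finset.sum_range_succ (f := e)]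
    ring


lemma Icc_sum (q : ℕ) : ∑ i ∈ Finset.Icc 1 q, (1:ℝ) / (4 * (i : ℝ) ^ 2 - 1)
    = ∑ n ∈ Finset.range q, 1 / (4 * ((n : ℝ) + 1) ^ 2 - 1) := by
  induction q with
  | zero => simp
  | succ q ih =>
    rw [Finset.sum_Icc_succ_top (by omega), ih, Finset.sum_range_succ]
    push_cast
    ring

end LegAux

open LegAux in
/-- For the Fourier–Legendre coefficients
`C_{j₂ j₁} = ∫_t^T φ_{j₂}(t₂) (∫_t^{t₂} φ_{j₁}(t₁) dt₁) dt₂` of the kernel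
`1_{t₁<t₂}` with respect to the orthonormal Legendre system on `[t,T]`,
`(T−t)²/2 − Σ_{j₁,j₂=0}^{q} C_{j₂ j₁}² = ((T−t)²/2)(1/2 − Σ_{i=1}^{q} 1/(4i²−1))`. -/
theorem legendre_double_integral_error
    (t T : ℝ) (ht : t < T) (q : ℕ)
    (P : ℕ → ℝ → ℝ)
    (hP : ∀ (n : ℕ) (y : ℝ), P n y =
      (1 / (2 ^ n * (Nat.factorial n) : ℝ)) *
        iteratedDeriv n (fun z : ℝ => (z ^ 2 - 1) ^ n) y)
    (φ : ℕ → ℝ → ℝ)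
    (hφ : ∀ (j : ℕ) (x : ℝ), φ j x =
      Real.sqrt ((2 * (j : ℝ) + 1) / (T - t)) *
        P j ((x - (T + t) / 2) * (2 / (T - t))))
    (C : ℕ → ℕ → ℝ)
    (hC : ∀ j₂ j₁ : ℕ, C j₂ j₁ = ∫ t₂ in t..T, φ j₂ t₂ * ∫ t₁ in t..t₂, φ j₁ t₁) :
    (T - t) ^ 2 / 2
        - ∑ j₁ ∈ Finset.range (q + 1), ∑ j₂ ∈ Finset.range (q + 1), (C j₂ j₁) ^ 2 =
      ((T - t) ^ 2 / 2) * (1 / 2 - ∑ i ∈ Finset.Icc 1 q, 1 / (4 * (i : ℝ) ^ 2 - 1)) := by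
  have hh : (0:ℝ) < T - t := by linarith
  have hne : T - t ≠ 0 := ne_of_gt hh
  -- φ in terms of Q
  have hφ' : ∀ (j : ℕ) (x : ℝ), φ j x =
      Real.sqrt ((2 * (j : ℝ) + 1) / (T - t)) *
        (Q j).eval ((x - (T + t) / 2) * (2 / (T - t))) := by
    intro j x
    rw [hφ, hP]
    congr 1
    have hfun : (fun z : ℝ => (z ^ 2 - 1) ^ j) = fun z => (f j).eval z := by
      funext z
      simp [f]
    rw [hfun, iteratedDeriv_eval, Q, eval_mul, eval_C, cc]
  have hcont : ∀ j, Continuous (φ j) := by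
    intro j
    have hfe : φ j = fun x => Real.sqrt ((2 * (j : ℝ) + 1) / (T - t)) *
        (Q j).eval ((x - (T + t) / 2) * (2 / (T - t))) := funext (hφ' j)
    rw [hfe]
    exact continuous_const.mul ((Q j).continuous.comp
      ((continuous_id.sub continuous_const).mul continuous_const))
  have hAd : ∀ (j : ℕ) (s : ℝ), HasDerivAt
      (fun x => (A j).eval ((x - (T + t) / 2) * (2 / (T - t))))
      ((Q j).eval ((s - (T + t) / 2) * (2 / (T - t))) * (2 / (T - t))) s := by
    intro j s
    have h1 : HasDerivAt (fun x : ℝ => (x - (T + t) / 2) * (2 / (T - t))) (2 / (T - t)) s := by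
      simpa using ((hasDerivAt_id s).sub_const ((T + t) / 2)).mul_const (2 / (T - t))
    have h2 := ((A j).hasDerivAt ((s - (T + t) / 2) * (2 / (T - t)))).comp s h1
    rw [derivative_A] at h2
    exact h2
  have hut : (t - (T + t) / 2) * (2 / (T - t)) = -1 := by
    field_simp
    ring
  have huT : (T - (T + t) / 2) * (2 / (T - t)) = 1 := by
    field_simp
    ring
  have hinner : ∀ (j : ℕ) (s : ℝ), (∫ x in t..s, φ j x) =
      Real.sqrt ((2 * (j : ℝ) + 1) / (T - t)) * ((T - t) / 2) *
        (A j).eval ((s - (T + t) / 2) * (2 / (T - t))) := by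
    intro j s
    have hderiv : ∀ x ∈ Set.uIcc t s, HasDerivAt
        (fun x => Real.sqrt ((2 * (j : ℝ) + 1) / (T - t)) * ((T - t) / 2) *
          (A j).eval ((x - (T + t) / 2) * (2 / (T - t)))) (φ j x) x := by
      intro x _
      have h2 := (hAd j x).const_mul
        (Real.sqrt ((2 * (j : ℝ) + 1) / (T - t)) * ((T - t) / 2))
      refine h2.congr_deriv ?_
      rw [hφ' j x]
      field_simp
    rw [intervalIntegral.integral_eq_sub_of_hasDerivAt hderiv
      ((hcont j).intervalIntegrable t s)]
    rw [hut, A_eval_neg_one, mul_zero, sub_zero]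
  -- outer integral
  have houter : ∀ j₂ j₁ : ℕ, C j₂ j₁ =
      (Real.sqrt ((2 * (j₂ : ℝ) + 1) / (T - t)) * ((T - t) / 2)) *
        (Real.sqrt ((2 * (j₁ : ℝ) + 1) / (T - t)) * ((T - t) / 2)) * S j₂ j₁ := by
    intro j₂ j₁
    rw [hC]
    have hintg : ∀ s : ℝ, φ j₂ s * (∫ x in t..s, φ j₁ x) =
        (Real.sqrt ((2 * (j₂ : ℝ) + 1) / (T - t)) *
          (Real.sqrt ((2 * (j₁ : ℝ) + 1) / (T - t)) * ((T - t) / 2))) *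
          (Q j₂ * A j₁).eval ((2 / (T - t)) * s + (-(T + t) / (T - t))) := by
      intro s
      rw [hinner, hφ' j₂ s, eval_mul]
      have harg : (s - (T + t) / 2) * (2 / (T - t)) =
          (2 / (T - t)) * s + (-(T + t) / (T - t)) := by
        field_simp
        ring
      rw [harg]
      ring
    rw [intervalIntegral.integral_congr (g :=
      fun s => (Real.sqrt ((2 * (j₂ : ℝ) + 1) / (T - t)) *
          (Real.sqrt ((2 * (j₁ : ℝ) + 1) / (T - t)) * ((T - t) / 2))) *
          (Q j₂ * A j₁).eval ((2 / (T - t)) * s + (-(T + t) / (T - t))))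
      (fun s _ => hintg s)]
    rw [intervalIntegral.integral_const_mul]
    rw [intervalIntegral.integral_comp_mul_add
      (fun y => (Q j₂ * A j₁).eval y) (by positivity : (2 / (T - t)) ≠ 0)
      (-(T + t) / (T - t))]
    have e1 : 2 / (T - t) * t + -(T + t) / (T - t) = -1 := by
      field_simp
      ring
    have e2 : 2 / (T - t) * T + -(T + t) / (T - t) = 1 := by
      field_simp
      ring
    rw [e1, e2, smul_eq_mul]
    have e3 : (2 / (T - t))⁻¹ = (T - t) / 2 := by
      rw [inv_div]
    rw [e3]
    show _ = _ * L (Q j₂ * A j₁)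
    rw [L]
    ring
  have hK2 : ∀ j : ℕ, (Real.sqrt ((2 * (j : ℝ) + 1) / (T - t))) ^ 2
      = (2 * (j : ℝ) + 1) / (T - t) := fun j => Real.sq_sqrt (by positivity)
  have hCsq : ∀ j₂ j₁ : ℕ, (C j₂ j₁) ^ 2 =
      ((2 * (j₂ : ℝ) + 1) * (2 * (j₁ : ℝ) + 1) * (T - t) ^ 2 / 16) * (S j₂ j₁) ^ 2 := by
    intro j₂ j₁
    rw [houter]
    have expand : (Real.sqrt ((2 * (j₂ : ℝ) + 1) / (T - t)) * ((T - t) / 2) *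
        (Real.sqrt ((2 * (j₁ : ℝ) + 1) / (T - t)) * ((T - t) / 2)) * S j₂ j₁) ^ 2
        = (Real.sqrt ((2 * (j₂ : ℝ) + 1) / (T - t))) ^ 2 *
          (Real.sqrt ((2 * (j₁ : ℝ) + 1) / (T - t))) ^ 2 *
          ((T - t) / 2) ^ 2 * ((T - t) / 2) ^ 2 * (S j₂ j₁) ^ 2 := by
      ring
    rw [expand, hK2, hK2]
    field_simp
    ring
  -- the three value cases
  have h00 : (C 0 0) ^ 2 = (T - t) ^ 2 / 4 := by
    rw [hCsq, S_zero_zero]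
    push_cast
    ring
  have hadj : ∀ n : ℕ, (C (n+1) n) ^ 2 = (T - t) ^ 2 / (4 * (2*(n:ℝ)+1) * (2*(n:ℝ)+3)) := by
    intro n
    rw [hCsq, S_succ]
    have h1 : (2*(n:ℝ)+1) ≠ 0 := by positivity
    have h3 : (2*(n:ℝ)+3) ≠ 0 := by positivity
    push_cast
    field_simp
    ring
  have hadj' : ∀ n : ℕ, (C n (n+1)) ^ 2 = (T - t) ^ 2 / (4 * (2*(n:ℝ)+1) * (2*(n:ℝ)+3)) := by
    intro n
    rw [hCsq, S_pred]
    have h1 : (2*(n:ℝ)+1) ≠ 0 := by positivity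
    have h3 : (2*(n:ℝ)+3) ≠ 0 := by positivity
    push_cast
    field_simp
    ring
  have hz : ∀ m n : ℕ, ¬(m = 0 ∧ n = 0) → m ≠ n+1 → n ≠ m+1 → (C m n) ^ 2 = 0 := by
    intro m n h0 h1 h2
    rw [hCsq, S_eq_zero h0 h1 h2]
    ring
  have hdouble := double_sum_eval (fun a b => (C a b) ^ 2)
    (fun n => (T - t) ^ 2 / (4 * (2*(n:ℝ)+1) * (2*(n:ℝ)+3))) ((T - t) ^ 2 / 4)
    h00 hadj hadj' hz q
  rw [hdouble]
  rw [Icc_sum, mul_sub, Finset.mul_sum, Finset.mul_sum]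
  have hterm : ∀ n ∈ Finset.range q,
      2 * ((T - t) ^ 2 / (4 * (2*(n:ℝ)+1) * (2*(n:ℝ)+3)))
        = (T - t) ^ 2 / 2 * (1 / (4 * ((n : ℝ) + 1) ^ 2 - 1)) := by
    intro n _
    have h1 : (2*(n:ℝ)+1) ≠ 0 := by positivity
    have h3 : (2*(n:ℝ)+3) ≠ 0 := by positivity
    have h4 : (4 * ((n : ℝ) + 1) ^ 2 - 1) = (2*(n:ℝ)+1) * (2*(n:ℝ)+3) := by ring
    rw [h4]
    field_simp
    ring
  rw [Finset.sum_congr rfl hterm]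
  ring
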